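/- Let G=(N,Σ,P,S) be an ordered context-free grammar with no ε-rules, and let w be a string for which a ≺_G-least parse tree exists. Then the length of the (leftmost) derivation producing the least parse tree of w is at most (2|w|−1)·|N|. -/

import Mathlib

namespace Ocfg

/-- A symbol: nonterminal or terminal. -/
inductive Sym (N T : Type) : Type
  | nt : N → Sym N T
  | tm : T → Sym N T

/-- An (ordered) context-free grammar: each nonterminal has an ordered
list of right-hand sides; `start` is the start nonterminal. -/
structure OCFG (N T : Type) : Type where
  prods : N → List (List (Sym N T))
  start : N

/-- Ordered ranked trees used as parse trees: terminal leaves, ε-leaves,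
and internal nodes labelled by a nonterminal together with the index of
the rule applied there. -/
inductive PTree (N T : Type) : Type
  | leaf : T → PTree N T
  | eps  : PTree N T
  | node : N → ℕ → List (PTree N T) → PTree N T

mutual
/-- `ParseFrom G A w t`: `t` is a parse tree with root nonterminal `A`
and yield `w`. -/
inductive ParseFrom {N T : Type} (G : OCFG N T) : N → List T → PTree N T → Prop
  | epsNode (A : N) (i : ℕ) :
      (G.prods A)[i]? = some [] →
      ParseFrom G A [] (PTree.node A i [PTree.eps])
  | node (A : N) (i : ℕ) (r : List (Sym N T)) (w : List T) (cs : List (PTree N T)) :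
      (G.prods A)[i]? = some r → r ≠ [] → ParseSeq G r w cs →
      ParseFrom G A w (PTree.node A i cs)

/-- `ParseSeq G r w cs`: the trees `cs` match, in order, the symbols of `r`,
with concatenated yield `w`. -/
inductive ParseSeq {N T : Type} (G : OCFG N T) : List (Sym N T) → List T → List (PTree N T) → Prop
  | nil : ParseSeq G [] [] []
  | consTm (a : T) (r : List (Sym N T)) (w : List T) (cs : List (PTree N T)) :
      ParseSeq G r w cs →
      ParseSeq G (Sym.tm a :: r) (a :: w) (PTree.leaf a :: cs)
  | consNt (A : N) (t : PTree N T) (wA : List T) (r : List (Sym N T)) (w : List T)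
      (cs : List (PTree N T)) :
      ParseFrom G A wA t → ParseSeq G r w cs →
      ParseSeq G (Sym.nt A :: r) (wA ++ w) (t :: cs)
end

/-- The set `P_G(w)` of parse trees of `w`. -/
def parseTrees {N T : Type} (G : OCFG N T) (w : List T) : Set (PTree N T) :=
  {t | ParseFrom G G.start w t}

/-- `n(t)`: the sequence of rule indices of `t`, in pre-order. -/
def PTree.idxSeq {N T : Type} : PTree N T → List ℕ
  | .leaf _ => []
  | .eps => []
  | .node _ i cs => i :: (cs.attach.map (fun c => PTree.idxSeq c.1)).flatten
decreasing_by
  have := List.sizeOf_lt_of_mem c.2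
  simp_wf
  omega

/-- The order `≺_G` on parse trees: lexicographic comparison of the
pre-order rule-index sequences. -/
def treeLT {N T : Type} (t₁ t₂ : PTree N T) : Prop :=
  List.Lex (· < ·) t₁.idxSeq t₂.idxSeq

/-- One-step derivation relation `⇒` of the underlying CFG. -/
def OCFG.Step {N T : Type} (G : OCFG N T) (u v : List (Sym N T)) : Prop :=
  ∃ (u₁ u₂ : List (Sym N T)) (A : N) (r : List (Sym N T)),
    r ∈ G.prods A ∧ u = u₁ ++ Sym.nt A :: u₂ ∧ v = u₁ ++ r ++ u₂

/-- `⇒*`. -/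
def OCFG.Derives {N T : Type} (G : OCFG N T) : List (Sym N T) → List (Sym N T) → Prop :=
  Relation.ReflTransGen G.Step

/-- A nonterminal is useful if it occurs in some sentential form derivable from
the start symbol and derives some terminal string. -/
def Useful {N T : Type} (G : OCFG N T) (A : N) : Prop :=
  (∃ u₁ u₂ : List (Sym N T), G.Derives [Sym.nt G.start] (u₁ ++ Sym.nt A :: u₂)) ∧
  (∃ w : List T, G.Derives [Sym.nt A] (w.map Sym.tm))

/-- `G` is cyclic if `A ⇒⁺ A` for some nonterminal `A`. -/
def Cyclic {N T : Type} (G : OCFG N T) : Prop :=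
  ∃ A : N, Relation.TransGen G.Step [Sym.nt A] [Sym.nt A]

/-- `G` has no ε-rules. -/
def NoEpsRules {N T : Type} (G : OCFG N T) : Prop :=
  ∀ (A : N) (r : List (Sym N T)), r ∈ G.prods A → r ≠ []

/-- A unit-rule step: `A → B` is a rule of `G`. -/
def UnitStep {N T : Type} (G : OCFG N T) (A B : N) : Prop :=
  [Sym.nt B] ∈ G.prods A

/-- `G` has a cycle of unit rules. -/
def HasUnitCycle {N T : Type} (G : OCFG N T) : Prop :=
  ∃ A : N, Relation.TransGen (UnitStep G) A A

/-- `G` is well-ordered: for every string `w`, every nonempty subset of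
`P_G(w)` has a `≺_G`-least element. -/
def WellOrderedG {N T : Type} (G : OCFG N T) : Prop :=
  ∀ (w : List T) (Φ : Set (PTree N T)), Φ ⊆ parseTrees G w → Φ.Nonempty →
    ∃ t ∈ Φ, ∀ t' ∈ Φ, t = t' ∨ treeLT t t'

/-- `t` is the `≺_G`-least parse tree of `w`. -/
def IsLeastTree {N T : Type} (G : OCFG N T) (w : List T) (t : PTree N T) : Prop :=
  ParseFrom G G.start w t ∧ ∀ t', ParseFrom G G.start w t' → t = t' ∨ treeLT t t'

/-- `G` has least parse trees. -/
def HasLeastTrees {N T : Type} (G : OCFG N T) : Prop :=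
  ∀ w : List T, (parseTrees G w).Nonempty → ∃ t, IsLeastTree G w t

/-- Derivations of a given length (number of steps). -/
inductive DerivesIn {N T : Type} (G : OCFG N T) : List (Sym N T) → List (Sym N T) → ℕ → Prop
  | refl (u : List (Sym N T)) : DerivesIn G u u 0
  | step (u v w : List (Sym N T)) (n : ℕ) :
      G.Step u v → DerivesIn G v w n → DerivesIn G u w (n + 1)

/-- Number of rule applications in a parse tree (= length of the
corresponding leftmost derivation). -/
def PTree.numRules {N T : Type} : PTree N T → ℕ
  | .leaf _ => 0
  | .eps => 0
  | .node _ _ cs => 1 + ((cs.attach.map (fun c => PTree.numRules c.1)).foldr (· + ·) 0)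
decreasing_by
  have := List.sizeOf_lt_of_mem c.2
  simp_wf
  omega

/-- Height of a tree: a single leaf has height 0. -/
def PTree.height {N T : Type} : PTree N T → ℕ
  | .leaf _ => 0
  | .eps => 0
  | .node _ _ cs => 1 + ((cs.attach.map (fun c => PTree.height c.1)).foldr max 0)
decreasing_by
  have := List.sizeOf_lt_of_mem c.2
  simp_wf
  omega

/-- The language of `G`. -/
def langOf {N T : Type} (G : OCFG N T) : Language T :=
  {w | ∃ t, ParseFrom G G.start w t}

end Ocfg

open Ocfg

/-!
In a least parse tree no nonterminal repeats along a chain of unit rules. Otherwise the rule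
sequence of the tree reads `pre ++ seg ++ X`, where `seg ≠ []` comes from the chain between the
two occurrences; cutting that chain out, or doubling it, gives parse trees of the same string with
sequences `pre ++ X` and `pre ++ seg ++ seg ++ X`, and minimality forces both to be at least
`pre ++ seg ++ X`, which is impossible. Hence every unit chain has at most `|N|` nodes. Without
ε-rules every subtree has a nonempty yield, so contracting the unit chains leaves a tree whose
nodes have at least two children or a single terminal child: it has at most `2|w| - 1` nodes, each
standing for at most `|N|` rule applications.
-/

lemma List.le_of_append_le_append_left {α : Type} [LinearOrder α] {p x y : List α}
    (h : p ++ x ≤ p ++ y) : x ≤ y :=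
  le_of_not_gt fun hyx => not_lt_of_ge h (List.append_left_lt hyx)

namespace Ocfg

variable {N T : Type}

namespace PTree

@[simp] lemma idxSeq_node (A : N) (i : ℕ) (cs : List (PTree N T)) :
    (node A i cs).idxSeq = i :: (cs.map idxSeq).flatten := by
  rw [idxSeq]; simp

@[simp] lemma idxSeq_leaf (a : T) : (leaf a : PTree N T).idxSeq = [] := by
  rw [idxSeq]

@[simp] lemma numRules_node (A : N) (i : ℕ) (cs : List (PTree N T)) :
    (node A i cs).numRules = 1 + (cs.map numRules).sum := by
  rw [numRules]; simp [List.sum]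

@[simp] lemma numRules_leaf (a : T) : (leaf a : PTree N T).numRules = 0 := by
  rw [numRules]

/-- The labels of the maximal chain of single-child nodes from the root: in a parse tree without
ε-rules, the unit-rule nodes at the top followed by the node that ends them. -/
def spine : PTree N T → List N
  | node A _ [c] => A :: c.spine
  | node A _ _ => [A]
  | _ => []

end PTree

variable {G : OCFG N T}

theorem ParseSeq.length_eq {r : List (Sym N T)} {v : List T} {cs : List (PTree N T)} :
    ParseSeq G r v cs → cs.length = r.length
  | .nil => rfl
  | .consTm _ _ _ _ h => by simp [h.length_eq]
  | .consNt _ _ _ _ _ _ _ h => by simp [h.length_eq]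

theorem ParseFrom.yield_ne_nil (hne : NoEpsRules G) {A : N} {v : List T} {s : PTree N T} :
    ParseFrom G A v s → v ≠ []
  | .epsNode A _ hr => absurd rfl (hne A [] (List.mem_of_getElem? hr))
  | .node _ _ _ _ _ _ hr .nil => absurd rfl hr
  | .node _ _ _ _ _ _ _ (.consTm _ _ _ _ _) => List.cons_ne_nil _ _
  | .node _ _ _ _ _ _ _ (.consNt _ _ _ _ _ _ h _) => by simp [h.yield_ne_nil hne]

def IsContext (G : OCFG N T) (A : N) (u : List T) (B : N) (v : List T)
    (C : PTree N T → PTree N T) (pre post : List ℕ) : Prop :=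
  ∀ s, ParseFrom G B v s → ParseFrom G A u (C s) ∧ (C s).idxSeq = pre ++ s.idxSeq ++ post

def IsSeqContext (G : OCFG N T) (A : N) (u : List T) (r : List (Sym N T)) (v : List T)
    (K : List (PTree N T) → PTree N T) (pre post : List ℕ) : Prop :=
  ∀ cs, ParseSeq G r v cs →
    ParseFrom G A u (K cs) ∧ (K cs).idxSeq = pre ++ (cs.map PTree.idxSeq).flatten ++ post

namespace IsContext

variable {A B E : N} {u v x : List T}

lemma id (G : OCFG N T) (A : N) (u : List T) : IsContext G A u A u _root_.id [] [] :=
  fun _ hs => ⟨hs, by simp⟩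

lemma comp {C D : PTree N T → PTree N T} {p q p' q' : List ℕ}
    (hC : IsContext G A u B v C p q) (hD : IsContext G B v E x D p' q') :
    IsContext G A u E x (C ∘ D) (p ++ p') (q' ++ q) := by
  intro s hs
  obtain ⟨hDs, hDe⟩ := hD s hs
  obtain ⟨hCs, hCe⟩ := hC _ hDs
  exact ⟨hCs, by simp [hCe, hDe]⟩

lemma unit_node {i : ℕ} (hr : (G.prods A)[i]? = some [Sym.nt B]) :
    IsContext G A v B v (fun s => PTree.node A i [s]) [i] [] := by
  intro s hs
  refine ⟨.node A i _ v [s] hr (List.cons_ne_nil _ _) ?_, by simp⟩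
  simpa using ParseSeq.consNt B s v [] [] [] hs .nil

lemma children {C : PTree N T → PTree N T} {p q : List ℕ} {i : ℕ} {r : List (Sym N T)}
    (hC : IsContext G E x A v C p q) (hr : (G.prods A)[i]? = some r) (hr0 : r ≠ []) :
    IsSeqContext G E x r v (fun cs => C (PTree.node A i cs)) (p ++ [i]) q := by
  intro cs hcs
  obtain ⟨h, he⟩ := hC _ (.node A i r v cs hr hr0 hcs)
  exact ⟨h, by simp [he]⟩

end IsContext

namespace IsSeqContext

variable {A B E : N} {u v wA x : List T} {r : List (Sym N T)} {K : List (PTree N T) → PTree N T}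
  {p q : List ℕ}

lemma head {cs : List (PTree N T)} (hK : IsSeqContext G E x (Sym.nt B :: r) (wA ++ v) K p q)
    (hcs : ParseSeq G r v cs) :
    IsContext G E x B wA (fun c => K (c :: cs)) p ((cs.map PTree.idxSeq).flatten ++ q) := by
  intro c hc
  obtain ⟨h, he⟩ := hK _ (.consNt B c wA r v cs hc hcs)
  exact ⟨h, by simp [he]⟩

lemma tail_nt {c : PTree N T} (hK : IsSeqContext G E x (Sym.nt B :: r) (wA ++ v) K p q)
    (hc : ParseFrom G B wA c) :
    IsSeqContext G E x r v (fun cs => K (c :: cs)) (p ++ c.idxSeq) q := by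
  intro cs hcs
  obtain ⟨h, he⟩ := hK _ (.consNt B c wA r v cs hc hcs)
  exact ⟨h, by simp [he]⟩

lemma tail_tm {a : T} (hK : IsSeqContext G E x (Sym.tm a :: r) (a :: v) K p q) :
    IsSeqContext G E x r v (fun cs => K (PTree.leaf a :: cs)) p q := by
  intro cs hcs
  obtain ⟨h, he⟩ := hK _ (.consTm a r v cs hcs)
  exact ⟨h, by simp [he]⟩

end IsSeqContext

variable {w : List T} {t : PTree N T}

def Occurs (G : OCFG N T) (w : List T) (t : PTree N T) (A : N) (v : List T) (s : PTree N T) :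
    Prop :=
  ∃ C pre post, IsContext G G.start w A v C pre post ∧ t = C s

def SeqOccurs (G : OCFG N T) (w : List T) (t : PTree N T) (r : List (Sym N T)) (v : List T)
    (cs : List (PTree N T)) : Prop :=
  ∃ K pre post, IsSeqContext G G.start w r v K pre post ∧ t = K cs

lemma Occurs.root : Occurs G w t G.start w t :=
  ⟨id, [], [], .id G G.start w, rfl⟩

namespace Occurs

variable {A B : N} {v : List T} {i : ℕ}

lemma children {r : List (Sym N T)} {cs : List (PTree N T)}
    (h : Occurs G w t A v (.node A i cs)) (hr : (G.prods A)[i]? = some r) (hr0 : r ≠ []) :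
    SeqOccurs G w t r v cs := by
  obtain ⟨C, p, q, hC, rfl⟩ := h
  exact ⟨_, _, _, hC.children hr hr0, rfl⟩

lemma unit_child {c : PTree N T} (h : Occurs G w t A v (.node A i [c]))
    (hr : (G.prods A)[i]? = some [Sym.nt B]) : Occurs G w t B v c := by
  obtain ⟨C, p, q, hC, rfl⟩ := h
  exact ⟨_, _, _, hC.comp (.unit_node hr), rfl⟩

end Occurs

namespace SeqOccurs

variable {B : N} {v wA : List T} {r : List (Sym N T)} {c : PTree N T} {cs : List (PTree N T)}

lemma head (h : SeqOccurs G w t (Sym.nt B :: r) (wA ++ v) (c :: cs)) (hcs : ParseSeq G r v cs) :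
    Occurs G w t B wA c := by
  obtain ⟨K, p, q, hK, rfl⟩ := h
  exact ⟨_, _, _, hK.head hcs, rfl⟩

lemma tail_nt (h : SeqOccurs G w t (Sym.nt B :: r) (wA ++ v) (c :: cs))
    (hc : ParseFrom G B wA c) : SeqOccurs G w t r v cs := by
  obtain ⟨K, p, q, hK, rfl⟩ := h
  exact ⟨_, _, _, hK.tail_nt hc, rfl⟩

lemma tail_tm {a : T} (h : SeqOccurs G w t (Sym.tm a :: r) (a :: v) (.leaf a :: cs)) :
    SeqOccurs G w t r v cs := by
  obtain ⟨K, p, q, hK, rfl⟩ := h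
  exact ⟨_, _, _, hK.tail_tm, rfl⟩

end SeqOccurs

lemma IsLeastTree.idxSeq_le (ht : IsLeastTree G w t) {t' : PTree N T}
    (ht' : ParseFrom G G.start w t') : t.idxSeq ≤ t'.idxSeq := by
  rcases ht.2 t' ht' with rfl | hlt
  · exact le_rfl
  · exact le_of_lt hlt

lemma IsLeastTree.eq_nil_of_occurs_pump (ht : IsLeastTree G w t) {A : N} {v : List T}
    {D : PTree N T → PTree N T} {seg : List ℕ} {s : PTree N T}
    (hD : IsContext G A v A v D seg []) (hs : ParseFrom G A v s)
    (hocc : Occurs G w t A v (D s)) : seg = [] := by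
  obtain ⟨C, pre, post, hC, rfl⟩ := hocc
  obtain ⟨hDs, hDe⟩ := hD s hs
  obtain ⟨hDDs, hDDe⟩ := hD _ hDs
  have hcut : seg ++ (s.idxSeq ++ post) ≤ s.idxSeq ++ post :=
    List.le_of_append_le_append_left (p := pre) <| by
      simpa [(hC _ hDs).2, (hC _ hs).2, hDe] using ht.idxSeq_le (hC _ hs).1
  have hdouble : s.idxSeq ++ post ≤ seg ++ (s.idxSeq ++ post) :=
    List.le_of_append_le_append_left (p := pre ++ seg) <| by
      simpa [(hC _ hDs).2, (hC _ hDDs).2, hDe, hDDe] using ht.idxSeq_le (hC _ hDDs).1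
  simpa using congrArg List.length (le_antisymm hcut hdouble)

theorem ParseFrom.exists_isContext_of_mem_spine {A B : N} {v : List T} {s : PTree N T}
    (hs : ParseFrom G A v s) (hB : B ∈ s.spine) :
    ∃ D seg s', IsContext G A v B v D seg [] ∧ s = D s' ∧ ParseFrom G B v s' := by
  by_cases hBA : B = A
  · subst hBA
    exact ⟨id, [], s, .id G B v, rfl, hs⟩
  match hs, hB with
  | .node _ i _ _ [c] hr _ (.consNt _ _ _ _ _ _ hc .nil), hB =>
    rw [List.append_nil]
    obtain ⟨D, seg, s', hD, rfl, hs'⟩ :=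
      hc.exists_isContext_of_mem_spine ((List.mem_cons.1 hB).resolve_left hBA)
    exact ⟨_, _, s', (IsContext.unit_node hr).comp hD, rfl, hs'⟩
  | .epsNode .., hB | .node _ _ _ _ [] .., hB | .node _ _ _ _ (_ :: _ :: _) .., hB
  | .node _ _ _ _ [_] _ _ (.consTm ..), hB => simp_all [PTree.spine]

theorem IsLeastTree.spine_nodup (ht : IsLeastTree G w t) {A : N} {v : List T} {s : PTree N T}
    (hs : ParseFrom G A v s) (hocc : Occurs G w t A v s) : s.spine.Nodup := by
  match hs, hocc with
  | .node _ i _ _ [c] hr _ (.consNt _ _ _ _ _ _ hc .nil), hocc =>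
    rw [List.append_nil] at hocc
    refine List.nodup_cons.2 ⟨fun hA => ?_, ht.spine_nodup hc (hocc.unit_child hr)⟩
    obtain ⟨D, seg, s', hD, rfl, hs'⟩ := hc.exists_isContext_of_mem_spine hA
    simpa using ht.eq_nil_of_occurs_pump ((IsContext.unit_node hr).comp hD) hs' hocc
  | .epsNode .., _ | .node _ _ _ _ [] .., _ | .node _ _ _ _ (_ :: _ :: _) .., _
  | .node _ _ _ _ [_] _ _ (.consTm ..), _ => simp [PTree.spine]

mutual

theorem ParseFrom.numRules_le (hne : NoEpsRules G) {c : ℕ}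
    (hspine : ∀ A v s, ParseFrom G A v s → Occurs G w t A v s → s.spine.length ≤ c)
    {A : N} {v : List T} {s : PTree N T} :
    ParseFrom G A v s → Occurs G w t A v s → s.numRules ≤ 2 * (v.length - 1) * c + s.spine.length
  | .epsNode A _ hr, _ => absurd rfl (hne A [] (List.mem_of_getElem? hr))
  | .node _ _ _ _ [] _ hr0 .nil, _ => absurd rfl hr0
  | .node _ _ _ _ [_] _ _ (.consTm _ _ _ _ .nil), _ => by simp [PTree.spine]
  | .node _ _ _ _ [_] hr _ (.consNt _ _ _ _ _ _ hc .nil), hocc => by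
    rw [List.append_nil] at hocc ⊢
    have := hc.numRules_le hne hspine (hocc.unit_child hr)
    simp only [PTree.numRules_node, PTree.spine, List.map_cons, List.map_nil, List.sum_cons,
      List.sum_nil, List.length_cons]
    omega
  | .node _ _ r _ (_ :: _ :: _) hr hr0 hcs, hocc => by
    have hsum := hcs.sum_numRules_add_le hne hspine (hocc.children hr hr0)
    have hr2 : 2 ≤ r.length := by simp [← hcs.length_eq]
    have := Nat.mul_le_mul_right c hr2
    simp only [PTree.numRules_node, PTree.spine, List.length_singleton]
    rw [Nat.mul_sub_one, Nat.sub_mul]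
    omega

theorem ParseSeq.sum_numRules_add_le (hne : NoEpsRules G) {c : ℕ}
    (hspine : ∀ A v s, ParseFrom G A v s → Occurs G w t A v s → s.spine.length ≤ c)
    {r : List (Sym N T)} {v : List T} {cs : List (PTree N T)} :
    ParseSeq G r v cs → SeqOccurs G w t r v cs →
      (cs.map PTree.numRules).sum + r.length * c ≤ 2 * v.length * c
  | .nil, _ => by simp
  | .consTm _ _ _ _ hcs, hocc => by
    have := hcs.sum_numRules_add_le hne hspine hocc.tail_tm
    simp only [List.map_cons, PTree.numRules_leaf, List.sum_cons, List.length_cons]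
    nlinarith
  | .consNt B _ wA _ _ _ hc hcs, hocc => by
    have hhead := hc.numRules_le hne hspine (hocc.head hcs)
    have htail := hcs.sum_numRules_add_le hne hspine (hocc.tail_nt hc)
    have hshort := hspine B wA _ hc (hocc.head hcs)
    have hwA := List.length_pos_iff.2 (hc.yield_ne_nil hne)
    simp only [List.map_cons, List.sum_cons, List.length_cons, List.length_append]
    rw [Nat.mul_sub_one, Nat.sub_mul] at hhead
    have : 2 * c ≤ 2 * wA.length * c := by nlinarith
    rw [Nat.add_mul, mul_add, Nat.add_mul]
    omega

end

end Ocfg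


/-- In an oCFG with no ε-rules, the leftmost derivation of the
`≺_G`-least parse tree of `w` (i.e. its number of rule applications) has
length at most `(2|w| − 1)·|N|`. -/
theorem stmt9 {N T : Type} [Fintype N] [Fintype T] (G : OCFG N T)
    (hne : NoEpsRules G) (w : List T) (t : PTree N T)
    (hleast : IsLeastTree G w t) :
    t.numRules ≤ (2 * w.length - 1) * Fintype.card N := by
  have hspine : ∀ A v s, ParseFrom G A v s → Occurs G w t A v s →
      s.spine.length ≤ Fintype.card N :=
    fun _ _ _ hs hocc => (hleast.spine_nodup hs hocc).length_le_card
  have hcount := hleast.1.numRules_le hne hspine .root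
  have hroot := hspine _ _ _ hleast.1 .root
  have hw := List.length_pos_iff.2 (hleast.1.yield_ne_nil hne)
  calc t.numRules ≤ 2 * (w.length - 1) * Fintype.card N + Fintype.card N := by omega
    _ = (2 * w.length - 1) * Fintype.card N := by
      rw [← Nat.succ_mul]; congr 1; omega
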